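/- Assume Hypothesis (HA) and let k ≥ 1 be a natural number such that σ_per(P) = {λ e^{2πi j/k} : j = 0, 1, …, k−1}. Then ker(P^{k+1} − λ^{k+1}) = ker(P − λ) = span_ℂ{g} in L^∞(M,μ;ℂ). -/

import Mathlib

/-!
An eigenvalue `β` of `P` on `L^∞` with `β ^ (k + 1) = λ ^ (k + 1)` has modulus `λ`, so it lies in
the peripheral spectrum and therefore also satisfies `β ^ k = λ ^ k`; dividing, `β = λ`.
Now `X ^ (k + 1) - λ ^ (k + 1) = q · (X - λ)` where `q` has the roots `ζ ^ i λ`, `1 ≤ i ≤ k`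
(`ζ` a primitive `(k + 1)`-th root of unity). None of them is an eigenvalue, so `q(P)` is
injective and `P ^ (k + 1) f = λ ^ (k + 1) f` forces `P f = λ f`. This linear algebra is done
with the operator `T` on `L^∞`, which agrees with `P` on bounded measurable representatives.
Finally, the real and imaginary parts of a complex `λ`-eigenfunction are real
`λ`-eigenfunctions, hence multiples of `g` by (HA)(iii).
-/

open MeasureTheory ProbabilityTheory Filter Topology

namespace QEM

noncomputable section

variable {M : Type*} [MetricSpace M] [CompactSpace M] [MeasurableSpace M] [BorelSpace M]

/-- The weighted Koopman operator on real-valued functions: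
`P f (x) = e^{φ(x)} ∫ f(y) κ(x,dy)`. -/
def PR (φ : M → ℝ) (κ : Kernel M M) (f : M → ℝ) : M → ℝ :=
  fun x => Real.exp (φ x) * ∫ y, f y ∂(κ x)

/-- The weighted Koopman operator on complex-valued functions
(`P f := P(Re f) + i P(Im f)`, equivalently with the complex Bochner integral). -/
def PC (φ : M → ℝ) (κ : Kernel M M) (f : M → ℂ) : M → ℂ :=
  fun x => (Real.exp (φ x) : ℂ) * ∫ y, f y ∂(κ x)

/-- Bounded measurable real-valued functions. -/
def BddMeas (f : M → ℝ) : Prop := Measurable f ∧ ∃ C : ℝ, ∀ x, |f x| ≤ C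

/-- Bounded measurable complex-valued functions. -/
def BddMeasC (f : M → ℂ) : Prop := Measurable f ∧ ∃ C : ℝ, ∀ x, ‖f x‖ ≤ C

/-- The operator `P_g f := P (1_{g>0} · f)`. -/
def Pg (φ : M → ℝ) (κ : Kernel M M) (g : M → ℝ) : (M → ℝ) → (M → ℝ) :=
  fun f => PR φ κ (Set.indicator {x | 0 < g x} f)

/-- Complex version of `P_g`. -/
def PgC (φ : M → ℝ) (κ : Kernel M M) (g : M → ℝ) : (M → ℂ) → (M → ℂ) :=
  fun f => PC φ κ (Set.indicator {x | 0 < g x} f)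

/-- The indicator function of `{g > 0}`. -/
def oneG (g : M → ℝ) : M → ℝ := Set.indicator {x | 0 < g x} (fun _ => (1 : ℝ))

/-- The normalized restriction `μ̃` of `μ` to `{g > 0}`, i.e.
`μ̃(A) = μ(A ∩ {g>0}) / μ({g>0})`. -/
def mtilde (μ : Measure M) (g : M → ℝ) : Measure M :=
  (μ {x | 0 < g x})⁻¹ • μ.restrict {x | 0 < g x}

/-- The root-of-unity phase `e^{2πi j/k}`. -/
def rootU (k j : ℕ) : ℂ := Complex.exp (2 * (Real.pi : ℂ) * Complex.I * (j : ℂ) / (k : ℂ))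

/-- Basic standing setup: `μ` is a fully supported Borel probability measure, `κ` a
sub-Markov kernel with `κ(x,·) ≪ μ` for all `x`, and `φ` a (bounded) continuous function. -/
structure Setup (μ : Measure M) (κ : Kernel M M) (φ : M → ℝ) : Prop where
  prob : IsProbabilityMeasure μ
  fullSupp : ∀ U : Set M, IsOpen U → U.Nonempty → 0 < μ U
  subMarkov : ∀ x, κ x Set.univ ≤ 1
  ac : ∀ x, κ x ≪ μ
  contφ : Continuous φ

/-- Hypothesis (HA): (i) `P` is strong Feller; (ii) `lam > 0` equals the spectral radius of the
induced operator `T` on `L^∞(M,μ;ℂ)` (where `T` agrees a.e. with the pointwise operator `P` on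
bounded measurable representatives); (iii) the eigenspace of `P` at `lam` in `L^∞(M,μ)` is
one-dimensional, spanned by a continuous nonnegative `g ≢ 0` with `P g = lam·g` and
`∫ g dμ = μ {g>0}`; (iv) `P^*μ = lam·μ`. -/
structure HypHA (μ : Measure M) (κ : Kernel M M) (φ : M → ℝ)
    (T : Lp ℂ ⊤ μ →L[ℂ] Lp ℂ ⊤ μ) (lam : ℝ) (g : M → ℝ) : Prop where
  setup : Setup μ κ φ
  strongFeller : ∀ f : M → ℝ, BddMeas f → Continuous (PR φ κ f)
  lam_pos : 0 < lam
  Tcompat : ∀ f : M → ℂ, BddMeasC f → ∀ F : Lp ℂ ⊤ μ, ⇑F =ᵐ[μ] f →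
      ⇑(T F) =ᵐ[μ] PC φ κ f
  specRad : spectralRadius ℂ T = ENNReal.ofReal lam
  g_cont : Continuous g
  g_nonneg : ∀ x, 0 ≤ g x
  g_ne : g ≠ 0
  g_eigen : PR φ κ g = fun x => lam * g x
  g_int : ∫ x, g x ∂μ = (μ {x | 0 < g x}).toReal
  eigen_dim : ∀ f : M → ℝ, BddMeas f → PR φ κ f =ᵐ[μ] (fun x => lam * f x) →
      ∃ c : ℝ, f =ᵐ[μ] fun x => c * g x
  Pstar : ∀ f : M → ℝ, BddMeas f → ∫ x, PR φ κ f x ∂μ = lam * ∫ x, f x ∂μ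

/-- Membership in the point peripheral spectrum `σ_per(P)`:
`|α| = lam` and `P f = α f` for some nonzero `f ∈ L^∞(M,μ;ℂ)`. -/
def PerSpec (μ : Measure M) (κ : Kernel M M) (φ : M → ℝ) (lam : ℝ) (α : ℂ) : Prop :=
  ‖α‖ = lam ∧ ∃ f : M → ℂ, BddMeasC f ∧ ¬ (f =ᵐ[μ] 0) ∧ PC φ κ f =ᵐ[μ] fun x => α * f x

/-- `σ_per(P) = {lam·e^{2πi j/k} : j = 0, …, k-1}`. -/
def PerSpecEq (μ : Measure M) (κ : Kernel M M) (φ : M → ℝ) (lam : ℝ) (k : ℕ) : Prop :=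
  ∀ α : ℂ, PerSpec μ κ φ lam α ↔ ∃ j : ℕ, j < k ∧ α = (lam : ℂ) * rootU k j

/-- A family of `k` linearly independent, nonnegative, continuous functions with pairwise
disjoint supports, spanning `ker(P^k - lam^k)` in `L^∞(M,μ;ℂ)`, each of integral `μ {g>0}`. -/
structure PreFamily (μ : Measure M) (κ : Kernel M M) (φ : M → ℝ) (lam : ℝ) (g : M → ℝ)
    (k : ℕ) (gi : Fin k → M → ℝ) : Prop where
  cont : ∀ i, Continuous (gi i)
  nonneg : ∀ i x, 0 ≤ gi i x
  indep : LinearIndependent ℝ gi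
  span_ker : ∀ f : M → ℂ, BddMeasC f →
      (((PC φ κ)^[k] f) =ᵐ[μ] fun x => (lam : ℂ) ^ k * f x) ↔
        ∃ c : Fin k → ℂ, f =ᵐ[μ] fun x => ∑ i, c i * (gi i x : ℂ)
  integral : ∀ i, ∫ x, gi i x ∂μ = (μ {x | 0 < g x}).toReal
  disj : ∀ i j, i ≠ j → ∀ x, ¬ (0 < gi i x ∧ 0 < gi j x)

/-- The cyclic family hypothesis: nonnegative continuous `g_0, …, g_{k-1}` supported in `{g>0}`
with pairwise disjoint supports, spanning `ker(P^k - lam^k)` in `L^∞(M,μ;ℂ)`, with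
`∫ g_i dμ = μ {g>0}`, `P g_i = lam·g_{i-1 (mod k)}` and `g = (1/k) ∑ g_i`. -/
structure CyclicFamily (μ : Measure M) (κ : Kernel M M) (φ : M → ℝ) (lam : ℝ) (g : M → ℝ)
    (k : ℕ) [NeZero k] (gi : Fin k → M → ℝ) : Prop where
  cont : ∀ i, Continuous (gi i)
  nonneg : ∀ i x, 0 ≤ gi i x
  supported : ∀ i x, 0 < gi i x → 0 < g x
  disj : ∀ i j, i ≠ j → ∀ x, ¬ (0 < gi i x ∧ 0 < gi j x)
  span_ker : ∀ f : M → ℂ, BddMeasC f →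
      (((PC φ κ)^[k] f) =ᵐ[μ] fun x => (lam : ℂ) ^ k * f x) ↔
        ∃ c : Fin k → ℂ, f =ᵐ[μ] fun x => ∑ i, c i * (gi i x : ℂ)
  integral : ∀ i, ∫ x, gi i x ∂μ = (μ {x | 0 < g x}).toReal
  cycle : ∀ i : Fin k, PR φ κ (gi i) = fun x => lam * gi (i - 1) x
  avg : g = fun x => (1 / (k : ℝ)) * ∑ i, gi i x

/-- The spectral decomposition hypothesis: a closed `P_g`-invariant subspace `V` of
`L^∞({g>0},μ;ℂ)` with `L^∞({g>0},μ;ℂ) = span{g_0,…,g_{k-1}} ⊕ V` and such that the spectral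
radius of `P_g` restricted to `V` is `< lam` (expressed through a geometric bound on the
iterates, via Gelfand's formula). -/
structure SpecDecomp (μ : Measure M) (κ : Kernel M M) (φ : M → ℝ) (lam : ℝ) (g : M → ℝ)
    (k : ℕ) (gi : Fin k → M → ℝ) (V : Submodule ℂ (M → ℂ)) : Prop where
  meas : ∀ v ∈ V, Measurable v
  bdd : ∀ v ∈ V, ∃ C : ℝ, ∀ x, ‖v x‖ ≤ C
  supp : ∀ v ∈ V, ∀ x, ¬ 0 < g x → v x = 0
  invariant : ∀ v ∈ V, PgC φ κ g v ∈ V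
  closed : ∀ (u : ℕ → M → ℂ) (f : M → ℂ), (∀ n, u n ∈ V) → Measurable f →
      (∃ C : ℝ, ∀ x, ‖f x‖ ≤ C) → (∀ x, ¬ 0 < g x → f x = 0) →
      Tendsto (fun n => eLpNorm (u n - f) ⊤ μ) atTop (nhds 0) → f ∈ V
  decomp : ∀ f : M → ℂ, BddMeasC f → (∀ x, ¬ 0 < g x → f x = 0) →
      ∃ c : Fin k → ℂ, ∃ v ∈ V, f = fun x => (∑ i, c i * (gi i x : ℂ)) + v x
  unique : ∀ c : Fin k → ℂ, (fun x => ∑ i, c i * (gi i x : ℂ)) ∈ V → c = 0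
  gap : ∃ r : ℝ, 0 ≤ r ∧ r < lam ∧ ∃ C : ℝ, ∀ n : ℕ, ∀ v ∈ V,
      eLpNorm ((PgC φ κ g)^[n] v) ⊤ μ ≤ ENNReal.ofReal (C * r ^ n) * eLpNorm v ⊤ μ

/-- The operator `P^{k+1} - lam^{k+1}` on complex-valued functions. -/
def Qop (φ : M → ℝ) (κ : Kernel M M) (lam : ℝ) (k : ℕ) : (M → ℂ) → (M → ℂ) :=
  fun h x => (PC φ κ)^[k + 1] h x - (lam : ℂ) ^ (k + 1) * h x

open Polynomial in
theorem _root_.Module.End.pow_apply_eq_pow_smul_iff {K V : Type*} [Field K] [AddCommGroup V]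
    [Module K V] (L : Module.End K V) {n : ℕ} (hn : 0 < n) {ζ : K} (hζ : IsPrimitiveRoot ζ n)
    {a : K} (ha : a ≠ 0) (hspec : ∀ β, L.HasEigenvalue β → β ^ n = a ^ n → β = a) (v : V) :
    (L ^ n) v = a ^ n • v ↔ L v = a • v := by
  refine ⟨fun hv => ?_, fun hv => ?_⟩
  · set q : K[X] := ∏ i ∈ Finset.range (n - 1), (X - C (ζ ^ (i + 1) * a))
    have hfactor : X ^ n - C (a ^ n) = q * (X - C a) := by
      obtain ⟨m, rfl⟩ : ∃ m, n = m + 1 := ⟨n - 1, by omega⟩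
      simpa [q, Finset.prod_range_succ'] using X_pow_sub_C_eq_prod hζ hn rfl
    have hinj : Function.Injective (aeval L q) := by
      refine Finset.prod_induction _ (fun p : K[X] => Function.Injective (aeval L p))
        (fun p r hp hr => by rw [map_mul, Module.End.coe_mul]; exact hp.comp hr)
        (by rw [map_one, Module.End.coe_one]; exact Function.injective_id) fun i hi => ?_
      have hβ : ¬ L.HasEigenvalue (ζ ^ (i + 1) * a) := fun h => by
        refine hζ.pow_ne_one_of_pos_of_lt i.succ_ne_zero (by simp at hi; omega) ?_
        refine (mul_eq_right₀ ha).1 (hspec _ h ?_)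
        rw [mul_pow, ← pow_mul, mul_comm (i + 1), pow_mul, hζ.pow_eq_one, one_pow, one_mul]
      rw [Module.End.hasEigenvalue_iff, not_not, Module.End.eigenspace_def,
        LinearMap.ker_eq_bot] at hβ
      rwa [map_sub, aeval_X, aeval_C, Algebra.algebraMap_eq_smul_one]
    have hqv := congrArg (fun p => aeval L p v) hfactor
    simp only [map_sub, aeval_X_pow, aeval_X, aeval_C, map_mul, Module.End.mul_apply,
      Module.algebraMap_end_apply, LinearMap.sub_apply, hv, sub_self] at hqv
    rw [← sub_eq_zero]
    exact hinj (by rw [map_zero, map_sub, ← hqv])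
  · obtain rfl | hv0 := eq_or_ne v 0
    · simp
    · exact Module.End.HasEigenvector.pow_apply ⟨Module.End.mem_eigenspace_iff.2 hv, hv0⟩ n

theorem rootU_pow_self (k j : ℕ) : rootU k j ^ k = 1 := by
  obtain rfl | hk := eq_or_ne k 0
  · exact pow_zero _
  rw [rootU, ← Complex.exp_nat_mul, mul_div_cancel₀ _ (Nat.cast_ne_zero.2 hk), mul_comm,
    Complex.exp_nat_mul_two_pi_mul_I]

section Operator

variable {X : Type*} [MeasurableSpace X] {μ : Measure X} {κ : Kernel X X} {φ : X → ℝ}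

theorem eq_of_perSpec_of_pow_eq {lam : ℝ} {k : ℕ} (hk : PerSpecEq μ κ φ lam k) (hlam : lam ≠ 0)
    {β : ℂ} (hβ : PerSpec μ κ φ lam β) (hpow : β ^ (k + 1) = (lam : ℂ) ^ (k + 1)) :
    β = lam := by
  obtain ⟨j, -, rfl⟩ := (hk β).1 hβ
  have hroot : ((lam : ℂ) * rootU k j) ^ k = (lam : ℂ) ^ k := by
    rw [mul_pow, rootU_pow_self, mul_one]
  rw [pow_succ, pow_succ, hroot] at hpow
  exact mul_left_cancel₀ (pow_ne_zero _ (Complex.ofReal_ne_zero.2 hlam)) hpow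

theorem BddMeasC.integrable {f : X → ℂ} (hf : BddMeasC f) (ν : Measure X) [IsFiniteMeasure ν] :
    Integrable f ν :=
  have ⟨C, hC⟩ := hf.2
  .of_bound hf.1.aestronglyMeasurable C (.of_forall hC)

theorem BddMeasC.memLp {f : X → ℂ} (hf : BddMeasC f) : MemLp f ⊤ μ :=
  have ⟨C, hC⟩ := hf.2
  memLp_top_of_bound hf.1.aestronglyMeasurable C (.of_forall hC)

theorem BddMeasC.re {f : X → ℂ} (hf : BddMeasC f) : BddMeas fun x => (f x).re :=
  have ⟨C, hC⟩ := hf.2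
  ⟨Complex.measurable_re.comp hf.1, C, fun x => (Complex.abs_re_le_norm _).trans (hC x)⟩

theorem BddMeasC.im {f : X → ℂ} (hf : BddMeasC f) : BddMeas fun x => (f x).im :=
  have ⟨C, hC⟩ := hf.2
  ⟨Complex.measurable_im.comp hf.1, C, fun x => (Complex.abs_im_le_norm _).trans (hC x)⟩

theorem exists_bddMeasC_ae_eq (F : Lp ℂ ⊤ μ) : ∃ f, BddMeasC f ∧ F =ᵐ[μ] f := by
  obtain ⟨g, hg, hFg⟩ := Lp.aestronglyMeasurable F
  set C := lpNorm F ⊤ μ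
  refine ⟨{x | ‖g x‖ ≤ C}.indicator g, ⟨hg.measurable.indicator
    (measurableSet_le hg.measurable.norm measurable_const), C, fun x => ?_⟩, ?_⟩
  · by_cases hx : ‖g x‖ ≤ C
    · simp [hx]
    · simp [hx, C, lpNorm_nonneg]
  · filter_upwards [hFg, ae_le_lpNorm_exponent_top (Lp.memLp F)] with x hx hC
    rw [hx] at hC ⊢
    exact (Set.indicator_of_mem (s := {x | ‖g x‖ ≤ C}) hC g).symm

theorem PC_congr_ae (hac : ∀ x, κ x ≪ μ) {f₁ f₂ : X → ℂ} (h : f₁ =ᵐ[μ] f₂) :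
    PC φ κ f₁ = PC φ κ f₂ :=
  funext fun x => congrArg _ (integral_congr_ae ((hac x).ae_le h))

theorem PC_const_mul (c : ℂ) (f : X → ℂ) :
    PC φ κ (fun x => c * f x) = fun x => c * PC φ κ f x := by
  funext x
  simp only [PC, integral_const_mul]
  ring

theorem PC_ofReal (u : X → ℝ) : PC φ κ (fun x => (u x : ℂ)) = fun x => (PR φ κ u x : ℂ) := by
  funext x
  simp only [PC, PR, integral_complex_ofReal, Complex.ofReal_mul]

theorem re_PC [IsFiniteKernel κ] {f : X → ℂ} (hf : BddMeasC f) (x : X) :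
    (PC φ κ f x).re = PR φ κ (fun y => (f y).re) x := by
  rw [PC, PR, Complex.re_ofReal_mul, ← RCLike.re_to_complex, ← integral_re (hf.integrable _)]
  rfl

theorem im_PC [IsFiniteKernel κ] {f : X → ℂ} (hf : BddMeasC f) (x : X) :
    (PC φ κ f x).im = PR φ κ (fun y => (f y).im) x := by
  rw [PC, PR, Complex.im_ofReal_mul, ← RCLike.im_to_complex, ← integral_im (hf.integrable _)]
  rfl

theorem PC_ae_eq_of_ae_eq_mul (hac : ∀ x, κ x ≪ μ) {lam : ℝ} {g : X → ℝ}
    (hg : PR φ κ g = fun x => lam * g x) {f : X → ℂ} {c : ℂ}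
    (hf : f =ᵐ[μ] fun x => c * g x) : PC φ κ f =ᵐ[μ] fun x => lam * f x := by
  rw [PC_congr_ae hac hf, PC_const_mul, PC_ofReal, hg]
  filter_upwards [hf] with x hx
  rw [hx]
  push_cast
  ring

theorem exists_ae_eq_mul_of_PC_ae_eq [IsFiniteKernel κ] {lam : ℝ} {g : X → ℝ}
    (hdim : ∀ u : X → ℝ, BddMeas u → PR φ κ u =ᵐ[μ] (fun x => lam * u x) →
      ∃ c : ℝ, u =ᵐ[μ] fun x => c * g x)
    {f : X → ℂ} (hf : BddMeasC f) (h : PC φ κ f =ᵐ[μ] fun x => lam * f x) :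
    ∃ c : ℂ, f =ᵐ[μ] fun x => c * g x := by
  obtain ⟨a, ha⟩ := hdim _ hf.re <| by
    filter_upwards [h] with x hx
    rw [← re_PC hf, hx, Complex.re_ofReal_mul]
  obtain ⟨b, hb⟩ := hdim _ hf.im <| by
    filter_upwards [h] with x hx
    rw [← im_PC hf, hx, Complex.im_ofReal_mul]
  refine ⟨a + b * Complex.I, ?_⟩
  filter_upwards [ha, hb] with x hxa hxb
  apply Complex.ext <;> simp [hxa, hxb]

def IsInducedOperator (μ : Measure X) (κ : Kernel X X) (φ : X → ℝ)
    (T : Lp ℂ ⊤ μ →L[ℂ] Lp ℂ ⊤ μ) : Prop :=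
  ∀ f : X → ℂ, BddMeasC f → ∀ F : Lp ℂ ⊤ μ, ⇑F =ᵐ[μ] f → ⇑(T F) =ᵐ[μ] PC φ κ f

variable {T : Lp ℂ ⊤ μ →L[ℂ] Lp ℂ ⊤ μ}

theorem coeFn_pow_apply_ae_eq_iterate (hac : ∀ x, κ x ≪ μ) (hT : IsInducedOperator μ κ φ T)
    {f : X → ℂ} {F : Lp ℂ ⊤ μ} (hF : ⇑F =ᵐ[μ] f) (n : ℕ) :
    ⇑(((T : Module.End ℂ (Lp ℂ ⊤ μ)) ^ n) F) =ᵐ[μ] (PC φ κ)^[n] f := by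
  induction n with
  | zero => exact hF
  | succ n ih =>
    obtain ⟨h, hh, hTh⟩ := exists_bddMeasC_ae_eq (((T : Module.End ℂ (Lp ℂ ⊤ μ)) ^ n) F)
    rw [pow_succ', Module.End.mul_apply, Function.iterate_succ_apply',
      ← PC_congr_ae hac (hTh.symm.trans ih)]
    exact hT h hh _ hTh

theorem iterate_ae_eq_mul_iff (hac : ∀ x, κ x ≪ μ) (hT : IsInducedOperator μ κ φ T)
    {f : X → ℂ} {F : Lp ℂ ⊤ μ} (hF : ⇑F =ᵐ[μ] f) (n : ℕ) (c : ℂ) :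
    ((PC φ κ)^[n] f =ᵐ[μ] fun x => c * f x) ↔
      ((T : Module.End ℂ (Lp ℂ ⊤ μ)) ^ n) F = c • F := by
  have hcF : ⇑(c • F) =ᵐ[μ] fun x => c * f x := by
    filter_upwards [Lp.coeFn_smul c F, hF] with x hx hFx
    rw [hx, Pi.smul_apply, hFx, smul_eq_mul]
  have hiter := coeFn_pow_apply_ae_eq_iterate hac hT hF n
  rw [Lp.ext_iff]
  exact ⟨fun h => hiter.trans (h.trans hcF.symm), fun h => hiter.symm.trans (h.trans hcF)⟩

theorem perSpec_of_hasEigenvalue (hac : ∀ x, κ x ≪ μ) (hT : IsInducedOperator μ κ φ T)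
    {lam : ℝ} {β : ℂ} (hβ : Module.End.HasEigenvalue (T : Module.End ℂ (Lp ℂ ⊤ μ)) β)
    (hnorm : ‖β‖ = lam) : PerSpec μ κ φ lam β := by
  obtain ⟨F, hFβ, hF0⟩ := hβ.exists_hasEigenvector
  obtain ⟨f, hf, hFf⟩ := exists_bddMeasC_ae_eq F
  refine ⟨hnorm, f, hf, fun hf0 => hF0 (Lp.ext_iff.2 ?_), ?_⟩
  · exact hFf.trans (hf0.trans (Lp.coeFn_zero ℂ ⊤ μ).symm)
  · simpa using (iterate_ae_eq_mul_iff hac hT hFf 1 β).2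
      (by simpa using Module.End.mem_eigenspace_iff.1 hFβ)

end Operator

theorem statement15_general (μ : Measure M) (κ : Kernel M M) (φ : M → ℝ)
    (T : Lp ℂ ⊤ μ →L[ℂ] Lp ℂ ⊤ μ) (lam : ℝ) (g : M → ℝ)
    (hHA : HypHA μ κ φ T lam g)
    (k : ℕ) (hk : PerSpecEq μ κ φ lam k) :
    ∀ f : M → ℂ, BddMeasC f →
      (((PC φ κ)^[k + 1] f =ᵐ[μ] fun x => (lam : ℂ) ^ (k + 1) * f x) ↔
        (PC φ κ f =ᵐ[μ] fun x => (lam : ℂ) * f x)) ∧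
      ((PC φ κ f =ᵐ[μ] fun x => (lam : ℂ) * f x) ↔
        ∃ c : ℂ, f =ᵐ[μ] fun x => c * (g x : ℂ)) := by
  obtain ⟨⟨-, -, hsub, hac, -⟩, -, hlam, hT, -, -, -, -, hg, -, hdim, -⟩ := hHA
  have : IsFiniteKernel κ := ⟨⟨1, ENNReal.one_lt_top, hsub⟩⟩
  have hspec (β : ℂ) (hβ : Module.End.HasEigenvalue (T : Module.End ℂ (Lp ℂ ⊤ μ)) β)
      (hpow : β ^ (k + 1) = (lam : ℂ) ^ (k + 1)) : β = lam := by
    have hnorm : ‖β‖ = lam := by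
      rw [← pow_left_inj₀ (norm_nonneg β) hlam.le k.succ_ne_zero, ← norm_pow, hpow, norm_pow,
        Complex.norm_of_nonneg hlam.le]
    exact eq_of_perSpec_of_pow_eq hk hlam.ne' (perSpec_of_hasEigenvalue hac hT hβ hnorm) hpow
  intro f hf
  have hF := hf.memLp.coeFn_toLp (μ := μ)
  refine ⟨?_, exists_ae_eq_mul_of_PC_ae_eq hdim hf,
    fun ⟨c, hc⟩ => PC_ae_eq_of_ae_eq_mul hac hg hc⟩
  rw [iterate_ae_eq_mul_iff hac hT hF, Module.End.pow_apply_eq_pow_smul_iff _ k.succ_pos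
    (Complex.isPrimitiveRoot_exp _ k.succ_ne_zero) (Complex.ofReal_ne_zero.2 hlam.ne') hspec,
    ← pow_one (T : Module.End ℂ (Lp ℂ ⊤ μ)), ← iterate_ae_eq_mul_iff hac hT hF,
    Function.iterate_one]

/-- **Step 2 of Lemma A.3.** Under Hypothesis (HA) with
`σ_per(P) = {lam e^{2πi j/k}}_{j<k}`:
`ker(P^{k+1} - lam^{k+1}) = ker(P - lam) = span_ℂ{g}` in `L^∞(M,μ;ℂ)`. -/
theorem statement15 (μ : Measure M) (κ : Kernel M M) (φ : M → ℝ)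
    (T : Lp ℂ ⊤ μ →L[ℂ] Lp ℂ ⊤ μ) (lam : ℝ) (g : M → ℝ)
    (hHA : HypHA μ κ φ T lam g)
    (k : ℕ) (hk1 : 1 ≤ k) (hk : PerSpecEq μ κ φ lam k) :
    ∀ f : M → ℂ, BddMeasC f →
      (((PC φ κ)^[k + 1] f =ᵐ[μ] fun x => (lam : ℂ) ^ (k + 1) * f x) ↔
        (PC φ κ f =ᵐ[μ] fun x => (lam : ℂ) * f x)) ∧
      ((PC φ κ f =ᵐ[μ] fun x => (lam : ℂ) * f x) ↔
        ∃ c : ℂ, f =ᵐ[μ] fun x => c * (g x : ℂ)) :=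
  statement15_general μ κ φ T lam g hHA k hk

end

end QEM
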